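/- Let ε ∈ (0,1], p ∈ Δ(K), x a mixed action, and x' := c_ε(x,p). Then for every i ∈ I: if i ∈ NR[x,ε,p], the posterior satisfies p^{x'}(·|i) = (1−ε)·∑_{i'∈NR[x,ε,p]} (x̄^p(i')/x̄^p(NR[x,ε,p]))·p^x(·|i') + ε·p; and otherwise p^{x'}(·|i) = (1−ε)·p^x(·|i) + ε·p. -/

import Mathlib

open Finset

noncomputable section
open Classical

/-- `p` is an element of the probability simplex Δ(K). -/
def pSimplex {K : Type*} [Fintype K] (p : K → ℝ) : Prop :=
  (∀ k, 0 ≤ p k) ∧ ∑ k, p k = 1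

/-- `x : K → Δ(I)` is a mixed action, written `x k i = x(i|k)`. -/
def MixedAction {K I : Type*} [Fintype K] [Fintype I] (x : K → I → ℝ) : Prop :=
  (∀ k i, 0 ≤ x k i) ∧ ∀ k, ∑ i, x k i = 1

/-- Marginal `x̄^p(i) = ∑_k p(k)·x(i|k)`. -/
def bar {K I : Type*} [Fintype K] (p : K → ℝ) (x : K → I → ℝ) (i : I) : ℝ :=
  ∑ k, p k * x k i

/-- Posterior `p^x(k|i)`. -/
def post {K I : Type*} [Fintype K] (p : K → ℝ) (x : K → I → ℝ) (i : I) (k : K) : ℝ :=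
  if bar p x i ≠ 0 then x k i * p k / bar p x i else p k

/-- The set `NR[x,ε,p]` of (x,ε)-non-revealing actions at p. -/
def NRset {K I : Type*} [Fintype K] [Fintype I] (x : K → I → ℝ) (ε : ℝ) (p : K → ℝ) :
    Finset I :=
  Finset.univ.filter fun i =>
    bar p x i ≠ 0 ∧ ∀ k, (1 - ε) * bar p x i ≤ x k i ∧ x k i ≤ (1 + ε) * bar p x i

/-- The set `R[x,ε,p]` of (x,ε)-revealing actions at p. -/
def Rset {K I : Type*} [Fintype K] [Fintype I] (x : K → I → ℝ) (ε : ℝ) (p : K → ℝ) :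
    Finset I :=
  (Finset.univ.filter fun i => bar p x i ≠ 0) \ NRset x ε p

/-- `x(A|k) = ∑_{i∈A} x(i|k)`. -/
def xOn {K I : Type*} (x : K → I → ℝ) (A : Finset I) (k : K) : ℝ := ∑ i ∈ A, x k i

/-- `x̄^p(A) = ∑_{i∈A} x̄^p(i)`. -/
def barOn {K I : Type*} [Fintype K] (p : K → ℝ) (x : K → I → ℝ) (A : Finset I) : ℝ :=
  ∑ i ∈ A, bar p x i

/-- The ε-silent mapping `c_ε(x,p)`. -/
def silent {K I : Type*} [Fintype K] [Fintype I] (ε : ℝ) (x : K → I → ℝ) (p : K → ℝ) :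
    K → I → ℝ :=
  fun k i =>
    if i ∈ NRset x ε p then
      ((1 - ε) * xOn x (NRset x ε p) k / barOn p x (NRset x ε p) + ε) * bar p x i
    else (1 - ε) * x k i + ε * bar p x i

/-!
The ε-silent mapping does not change the marginal `x̄^p`: averaging `c_ε(x,p)(i|·)` against `p`
returns `x̄^p(i)` because `∑_k p(k) x(A|k) = x̄^p(A)` and `∑_k p(k) = 1`. With equal
denominators, both posterior formulas become linear identities between the numerators
`c_ε(x,p)(i|k) p(k)`; on `NR[x,ε,p]` one also uses `x̄^p(i') p^x(k|i') = x(i'|k) p(k)`.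
-/

section

variable {K I : Type*} [Fintype K]

theorem sum_mul_xOn (p : K → ℝ) (x : K → I → ℝ) (A : Finset I) :
    ∑ k, p k * xOn x A k = barOn p x A := by
  simp only [xOn, Finset.mul_sum, barOn, bar]
  exact Finset.sum_comm

theorem bar_nonneg {p : K → ℝ} {x : K → I → ℝ} (hp : ∀ k, 0 ≤ p k) (hx : ∀ k i, 0 ≤ x k i)
    (i : I) : 0 ≤ bar p x i :=
  Finset.sum_nonneg fun k _ => mul_nonneg (hp k) (hx k i)

theorem bar_mul_post {p : K → ℝ} {x : K → I → ℝ} {i : I} (hi : bar p x i ≠ 0) (k : K) :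
    bar p x i * post p x i k = x k i * p k := by
  rw [post, if_pos hi]
  field_simp

variable [Fintype I]

theorem bar_ne_zero_of_mem_NRset {x : K → I → ℝ} {ε : ℝ} {p : K → ℝ} {i : I}
    (hi : i ∈ NRset x ε p) : bar p x i ≠ 0 :=
  (Finset.mem_filter.mp hi).2.1

theorem barOn_NRset_pos {p : K → ℝ} {x : K → I → ℝ} {ε : ℝ} (hp : ∀ k, 0 ≤ p k)
    (hx : ∀ k i, 0 ≤ x k i) {i : I} (hi : i ∈ NRset x ε p) :
    0 < barOn p x (NRset x ε p) :=
  ((bar_nonneg hp hx i).lt_of_ne (bar_ne_zero_of_mem_NRset hi).symm).trans_le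
    (Finset.single_le_sum (fun j _ => bar_nonneg hp hx j) hi)

theorem bar_silent_of_mem {p : K → ℝ} (hp : ∑ k, p k = 1) {x : K → I → ℝ} {ε : ℝ} {i : I}
    (hB : barOn p x (NRset x ε p) ≠ 0) (hi : i ∈ NRset x ε p) :
    bar p (silent ε x p) i = bar p x i := by
  set B := barOn p x (NRset x ε p)
  calc bar p (silent ε x p) i
      = ∑ k, ((1 - ε) / B * (p k * xOn x (NRset x ε p) k) + ε * p k) * bar p x i := by
        change ∑ k, p k * silent ε x p k i = _
        simp only [silent, if_pos hi]
        exact Finset.sum_congr rfl fun k _ => by ring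
    _ = bar p x i := by
        rw [← Finset.sum_mul, Finset.sum_add_distrib, ← Finset.mul_sum, ← Finset.mul_sum,
          sum_mul_xOn, hp]
        field_simp
        ring

theorem bar_silent_of_not_mem {p : K → ℝ} (hp : ∑ k, p k = 1) {x : K → I → ℝ} {ε : ℝ} {i : I}
    (hi : i ∉ NRset x ε p) : bar p (silent ε x p) i = bar p x i := by
  calc bar p (silent ε x p) i = ∑ k, ((1 - ε) * (p k * x k i) + ε * p k * bar p x i) := by
        change ∑ k, p k * silent ε x p k i = _
        simp only [silent, if_neg hi]
        exact Finset.sum_congr rfl fun k _ => by ring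
    _ = bar p x i := by
        rw [Finset.sum_add_distrib, ← Finset.mul_sum, ← Finset.sum_mul, ← Finset.mul_sum, hp]
        simp only [bar]
        ring

theorem post_silent_of_mem {p : K → ℝ} (hp : pSimplex p) {x : K → I → ℝ}
    (hx : ∀ k i, 0 ≤ x k i) {ε : ℝ} {i : I} (hi : i ∈ NRset x ε p) (k : K) :
    post p (silent ε x p) i k =
      (1 - ε) * (∑ i' ∈ NRset x ε p,
          bar p x i' / barOn p x (NRset x ε p) * post p x i' k) + ε * p k := by
  have hB := (barOn_NRset_pos hp.1 hx hi).ne'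
  have hbi := bar_ne_zero_of_mem_NRset hi
  have hsum : ∑ i' ∈ NRset x ε p, bar p x i' * post p x i' k = xOn x (NRset x ε p) k * p k := by
    rw [xOn, Finset.sum_mul]
    exact Finset.sum_congr rfl fun i' hi' => bar_mul_post (bar_ne_zero_of_mem_NRset hi') k
  simp only [div_mul_eq_mul_div, ← Finset.sum_div, hsum]
  rw [post, bar_silent_of_mem hp.2 hB hi, if_pos hbi, silent, if_pos hi]
  field_simp

theorem post_silent_of_not_mem {p : K → ℝ} (hp : ∑ k, p k = 1) {x : K → I → ℝ} {ε : ℝ}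
    {i : I} (hi : i ∉ NRset x ε p) (k : K) :
    post p (silent ε x p) i k = (1 - ε) * post p x i k + ε * p k := by
  by_cases hbi : bar p x i = 0
  · simp only [post, bar_silent_of_not_mem hp hi, hbi, ne_eq, not_true_eq_false, if_false]
    ring
  · rw [post, bar_silent_of_not_mem hp hi, if_pos hbi, post, if_pos hbi, silent, if_neg hi]
    field_simp

end

theorem silent_posterior_formula_general {K I : Type*} [Fintype K] [Fintype I]
    (ε : ℝ)
    (p : K → ℝ) (hp : pSimplex p)
    (x : K → I → ℝ) (hx : MixedAction x) :
    (∀ i ∈ NRset x ε p, ∀ k : K,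
        post p (silent ε x p) i k =
          (1 - ε) * (∑ i' ∈ NRset x ε p,
              bar p x i' / barOn p x (NRset x ε p) * post p x i' k) +
            ε * p k) ∧
      ∀ i ∉ NRset x ε p, ∀ k : K,
        post p (silent ε x p) i k = (1 - ε) * post p x i k + ε * p k :=
  ⟨fun _ hi => post_silent_of_mem hp hx.1 hi, fun _ hi => post_silent_of_not_mem hp.2 hi⟩

/-- posterior decomposition under the ε-silent mapping. -/
theorem silent_posterior_formula {K I : Type*} [Fintype K] [Fintype I] [Nonempty K] [Nonempty I]
    (ε : ℝ) (hε0 : 0 < ε) (hε1 : ε ≤ 1)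
    (p : K → ℝ) (hp : pSimplex p)
    (x : K → I → ℝ) (hx : MixedAction x) :
    (∀ i ∈ NRset x ε p, ∀ k : K,
        post p (silent ε x p) i k =
          (1 - ε) * (∑ i' ∈ NRset x ε p,
              bar p x i' / barOn p x (NRset x ε p) * post p x i' k) +
            ε * p k) ∧
      ∀ i ∉ NRset x ε p, ∀ k : K,
        post p (silent ε x p) i k = (1 - ε) * post p x i k + ε * p k :=
  silent_posterior_formula_general ε p hp x hx
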